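/- Let N be a finite index set, with fixed potential outcomes y0ᵢ, y1ᵢ ∈ ℝ and independent treatment indicators Tᵢ ~ Bernoulli(pᵢ), pᵢ ∈ (0,1). Let Πᵢ : Ω → {0,1} be a random policy inclusion indicator and ỹ0ᵢ, ỹ1ᵢ integrable predictors such that for each i, Tᵢ is independent of the triple (Πᵢ, ỹ0ᵢ, ỹ1ᵢ). Then the doubly-robust estimator V̂ = Σᵢ Πᵢ·[(Tᵢ/pᵢ)(Yᵢ - ỹ1ᵢ) - ((1-Tᵢ)/(1-pᵢ))(Yᵢ - ỹ0ᵢ) + ỹ1ᵢ - ỹ0ᵢ], with Yᵢ = Tᵢ·y1ᵢ + (1-Tᵢ)·y0ᵢ, satisfies E[V̂ - V_Π] = 0 where V_Π = Σᵢ Πᵢ·(y1ᵢ - y0ᵢ). -/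

import Mathlib

/-!
Any function of a `{0,1}`-valued `Tᵢ` is affine in `Tᵢ`, and `Tᵢ` is independent of
`Wᵢ = (Πᵢ, ỹ0ᵢ, ỹ1ᵢ)`; so the mean of the `i`-th summand `h(Tᵢ, Wᵢ)` of `V̂ - V_Π` is
`E[(1 - pᵢ) h(0, Wᵢ) + pᵢ h(1, Wᵢ)]`. The inverse-propensity weights `1/pᵢ` and `1/(1 - pᵢ)`
make this mixture vanish identically in `Wᵢ`, whatever the predictors and the policy are.
-/

open MeasureTheory ProbabilityTheory

section ZeroOneValued

variable {Ω β : Type*} [MeasurableSpace Ω] {μ : Measure Ω}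

lemma MeasureTheory.Integrable.mul_of_zero_or_one {f g : Ω → ℝ} (hg : Integrable g μ)
    (hf : AEStronglyMeasurable f μ) (hf01 : ∀ ω, f ω = 0 ∨ f ω = 1) :
    Integrable (fun ω => f ω * g ω) μ :=
  hg.bdd_mul hf (c := 1) <| .of_forall fun ω => by rcases hf01 ω with h | h <;> simp [h]

lemma eq_add_mul_sub_of_zero_or_one (h : ℝ → β → ℝ) {t : ℝ} (ht : t = 0 ∨ t = 1) (w : β) :
    h t w = h 0 w + t * (h 1 w - h 0 w) := by
  rcases ht with rfl | rfl <;> ring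

variable {T : Ω → ℝ} {W : Ω → β} {h : ℝ → β → ℝ}

lemma integrable_comp_of_zero_or_one (hT : AEStronglyMeasurable T μ)
    (hT01 : ∀ ω, T ω = 0 ∨ T ω = 1) (hi0 : Integrable (fun ω => h 0 (W ω)) μ)
    (hi1 : Integrable (fun ω => h 1 (W ω)) μ) :
    Integrable (fun ω => h (T ω) (W ω)) μ := by
  have hdiff : Integrable (fun ω => h 1 (W ω) - h 0 (W ω)) μ := hi1.sub hi0
  simp_rw [eq_add_mul_sub_of_zero_or_one h (hT01 _)]
  exact hi0.add (hdiff.mul_of_zero_or_one hT hT01)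

variable [MeasurableSpace β]

lemma integral_comp_of_indepFun_of_zero_or_one (hT : AEStronglyMeasurable T μ)
    (hT01 : ∀ ω, T ω = 0 ∨ T ω = 1) (hTW : IndepFun T W μ)
    (hh0 : Measurable (h 0)) (hh1 : Measurable (h 1))
    (hi0 : Integrable (fun ω => h 0 (W ω)) μ) (hi1 : Integrable (fun ω => h 1 (W ω)) μ) :
    ∫ ω, h (T ω) (W ω) ∂μ = ∫ ω, ((1 - μ[T]) * h 0 (W ω) + μ[T] * h 1 (W ω)) ∂μ := by
  have hdiff : Integrable (fun ω => h 1 (W ω) - h 0 (W ω)) μ := hi1.sub hi0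
  have hmean : ∫ ω, T ω * (h 1 (W ω) - h 0 (W ω)) ∂μ = μ[T] * ∫ ω, (h 1 (W ω) - h 0 (W ω)) ∂μ :=
    (hTW.comp measurable_id (hh1.sub hh0)).integral_fun_mul_eq_mul_integral hT
      hdiff.aestronglyMeasurable
  simp_rw [eq_add_mul_sub_of_zero_or_one h (hT01 _)]
  rw [integral_add hi0 (hdiff.mul_of_zero_or_one hT hT01), hmean,
    integral_add (hi0.const_mul _) (hi1.const_mul _), integral_const_mul, integral_const_mul,
    integral_sub hi1 hi0]
  ring

end ZeroOneValued

/-- The `i`-th summand of `V̂ - V_Π` as a function of `t = Tᵢ` and `w = (Πᵢ, ỹ0ᵢ, ỹ1ᵢ)`. -/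
noncomputable def drUnitError (p y0 y1 t : ℝ) (w : ℝ × ℝ × ℝ) : ℝ :=
  w.1 * ((t / p) * (t * y1 + (1 - t) * y0 - w.2.2)
    - ((1 - t) / (1 - p)) * (t * y1 + (1 - t) * y0 - w.2.1) + w.2.2 - w.2.1 - (y1 - y0))

lemma measurable_drUnitError (p y0 y1 t : ℝ) : Measurable (drUnitError p y0 y1 t) := by
  unfold drUnitError; fun_prop

lemma one_sub_mul_drUnitError_zero_add_mul_drUnitError_one {p : ℝ} (hp0 : p ≠ 0) (hp1 : 1 - p ≠ 0)
    (y0 y1 : ℝ) (w : ℝ × ℝ × ℝ) :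
    (1 - p) * drUnitError p y0 y1 0 w + p * drUnitError p y0 y1 1 w = 0 := by
  simp only [drUnitError]
  field_simp
  ring

lemma integrable_drUnitError {Ω : Type*} [MeasurableSpace Ω] {μ : Measure Ω} [IsFiniteMeasure μ]
    (p y0 y1 t : ℝ) {Pol yt0 yt1 : Ω → ℝ} (hPol : AEStronglyMeasurable Pol μ)
    (hPol01 : ∀ ω, Pol ω = 0 ∨ Pol ω = 1) (hyt0 : Integrable yt0 μ) (hyt1 : Integrable yt1 μ) :
    Integrable (fun ω => drUnitError p y0 y1 t (Pol ω, yt0 ω, yt1 ω)) μ := by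
  have hY := integrable_const (μ := μ) (t * y1 + (1 - t) * y0)
  exact Integrable.mul_of_zero_or_one
    (((((hY.sub hyt1).const_mul _).sub ((hY.sub hyt0).const_mul _)).add hyt1).sub hyt0 |>.sub
      (integrable_const _)) hPol hPol01

theorem doubly_robust_optimized_policy_unbiased_general
    {Ω : Type*} [MeasureSpace Ω] [IsProbabilityMeasure (ℙ : Measure Ω)]
    {ι : Type*} [Fintype ι]
    (T : ι → Ω → ℝ) (p : ι → ℝ) (y0 y1 : ι → ℝ)
    (hp0 : ∀ i, 0 < p i) (hp1 : ∀ i, p i < 1)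
    (hmT : ∀ i, Measurable (T i))
    (hT01 : ∀ i ω, T i ω = 0 ∨ T i ω = 1)
    (hE : ∀ i, ∫ ω, T i ω = p i)
    (Y : ι → Ω → ℝ) (hY : ∀ i ω, Y i ω = T i ω * y1 i + (1 - T i ω) * y0 i)
    (Pol : ι → Ω → ℝ) (hmPol : ∀ i, Measurable (Pol i))
    (hPol01 : ∀ i ω, Pol i ω = 0 ∨ Pol i ω = 1)
    (yt0 yt1 : ι → Ω → ℝ)
    (hInt0 : ∀ i, Integrable (yt0 i)) (hInt1 : ∀ i, Integrable (yt1 i))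
    (hIndep : ∀ i, IndepFun (T i) (fun ω => (Pol i ω, yt0 i ω, yt1 i ω)))
    (Vhat VPol : Ω → ℝ)
    (hV : ∀ ω, Vhat ω = ∑ i, Pol i ω *
        ((T i ω / p i) * (Y i ω - yt1 i ω)
          - ((1 - T i ω) / (1 - p i)) * (Y i ω - yt0 i ω) + yt1 i ω - yt0 i ω))
    (hVPol : ∀ ω, VPol ω = ∑ i, Pol i ω * (y1 i - y0 i)) :
    ∫ ω, (Vhat ω - VPol ω) = 0 := by
  let W i ω := (Pol i ω, yt0 i ω, yt1 i ω)
  have hintegrable : ∀ i t, Integrable fun ω => drUnitError (p i) (y0 i) (y1 i) t (W i ω) :=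
    fun i t => integrable_drUnitError _ _ _ t (hmPol i).aestronglyMeasurable (hPol01 i)
      (hInt0 i) (hInt1 i)
  have hunit : ∀ i, ∫ ω, drUnitError (p i) (y0 i) (y1 i) (T i ω) (W i ω) = 0 := fun i => by
    rw [integral_comp_of_indepFun_of_zero_or_one (hmT i).aestronglyMeasurable (hT01 i) (hIndep i)
      (measurable_drUnitError ..) (measurable_drUnitError ..) (hintegrable i 0) (hintegrable i 1),
      hE i]
    simp [one_sub_mul_drUnitError_zero_add_mul_drUnitError_one (hp0 i).ne'
      (sub_ne_zero.2 (hp1 i).ne')]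
  have hdecomp : ∀ ω, Vhat ω - VPol ω = ∑ i, drUnitError (p i) (y0 i) (y1 i) (T i ω) (W i ω) := by
    intro ω
    simp only [W, drUnitError, hV, hVPol, hY, ← Finset.sum_sub_distrib]
    exact Finset.sum_congr rfl fun i _ => by ring
  simp_rw [hdecomp]
  rw [integral_finsetSum _ fun i _ => integrable_comp_of_zero_or_one
    (hmT i).aestronglyMeasurable (hT01 i) (hintegrable i 0) (hintegrable i 1)]
  exact Finset.sum_eq_zero fun i _ => hunit i

/-- Main theorem: the doubly-robust estimator is unbiased for the value of an
optimized policy, provided each unit's treatment indicator Tᵢ is independent of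
the triple (Πᵢ, ỹ0ᵢ, ỹ1ᵢ). -/
theorem doubly_robust_optimized_policy_unbiased
    {Ω : Type*} [MeasureSpace Ω] [IsProbabilityMeasure (ℙ : Measure Ω)]
    {ι : Type*} [Fintype ι]
    (T : ι → Ω → ℝ) (p : ι → ℝ) (y0 y1 : ι → ℝ)
    (hp0 : ∀ i, 0 < p i) (hp1 : ∀ i, p i < 1)
    (hmT : ∀ i, Measurable (T i))
    (hT01 : ∀ i ω, T i ω = 0 ∨ T i ω = 1)
    (hE : ∀ i, ∫ ω, T i ω = p i)
    (hTindep : iIndepFun T)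
    (Y : ι → Ω → ℝ) (hY : ∀ i ω, Y i ω = T i ω * y1 i + (1 - T i ω) * y0 i)
    (Pol : ι → Ω → ℝ) (hmPol : ∀ i, Measurable (Pol i))
    (hPol01 : ∀ i ω, Pol i ω = 0 ∨ Pol i ω = 1)
    (yt0 yt1 : ι → Ω → ℝ)
    (hInt0 : ∀ i, Integrable (yt0 i)) (hInt1 : ∀ i, Integrable (yt1 i))
    (hIndep : ∀ i, IndepFun (T i) (fun ω => (Pol i ω, yt0 i ω, yt1 i ω)))
    (Vhat VPol : Ω → ℝ)
    (hV : ∀ ω, Vhat ω = ∑ i, Pol i ω *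
        ((T i ω / p i) * (Y i ω - yt1 i ω)
          - ((1 - T i ω) / (1 - p i)) * (Y i ω - yt0 i ω) + yt1 i ω - yt0 i ω))
    (hVPol : ∀ ω, VPol ω = ∑ i, Pol i ω * (y1 i - y0 i)) :
    ∫ ω, (Vhat ω - VPol ω) = 0 :=
  doubly_robust_optimized_policy_unbiased_general T p y0 y1 hp0 hp1 hmT hT01 hE Y hY Pol hmPol
    hPol01 yt0 yt1 hInt0 hInt1 hIndep Vhat VPol hV hVPol
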